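/- Let M satisfy M^T M = L, the normalized Laplacian of a d-regular graph G. If M is not (k, δ)-RIP due to a violation of the lower bound, i.e., there is a k-sparse x with ||Mx||_2 < (1−δ)||x||_2, then there exists a nonempty set S with |S| ≤ k and φ_G(S) ≤ sqrt(1 − (2δ − δ^2)^2). -/

import Mathlib

/-!
Squaring the violated lower RIP bound and using `Mᵀ M = I - A / d` gives the quadratic-form
bound `xᵀ A x > (2δ - δ²) d ‖x‖²`. For a symmetric `d`-regular `A` the quantities
`∑ A i j (x i ∓ x j)²` equal `2 (d ‖x‖² ∓ xᵀ A x)`, so Cauchy–Schwarz bounds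
`∑ A i j |x i² - x j²|` by `2 d √(1 - (2δ - δ²)²) ‖x‖²`. By the layer-cake formula this sum is
twice the integral over `t > 0` of the edge weight leaving the superlevel set `{i | t ≤ x i²}`,
while `‖x‖²` is the integral of its size; hence for some `t > 0` the superlevel set expands
less than `d √(1 - (2δ - δ²)²)` times its size, and it lies in the support of `x`.
-/

open Finset Matrix

section LayerCake

open MeasureTheory

lemma integrableOn_Ioi_indicator_one {s : Set ℝ} (hs : MeasurableSet s) {c : ℝ}
    (hsc : s ⊆ Set.Iic c) : IntegrableOn (s.indicator (1 : ℝ → ℝ)) (Set.Ioi 0) := by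
  refine (integrable_indicator_iff hs).2 (integrableOn_const ?_)
  rw [Measure.restrict_apply hs]
  refine ((measure_mono fun t ht => ?_).trans_lt (measure_Ioc_lt_top (a := 0) (b := c))).ne
  exact ⟨ht.2, hsc ht.1⟩

variable {ι : Type*} [Fintype ι]

noncomputable def superlevel (a : ι → ℝ) (t : ℝ) : Finset ι := {i | t ≤ a i}

lemma card_superlevel_eq_sum_indicator (a : ι → ℝ) (t : ℝ) :
    (#(superlevel a t) : ℝ) = ∑ i, (Set.Iic (a i)).indicator 1 t := by
  simp [superlevel, Set.indicator_apply, sum_boole]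

lemma integrableOn_card_superlevel (a : ι → ℝ) :
    IntegrableOn (fun t => (#(superlevel a t) : ℝ)) (Set.Ioi 0) := by
  simp_rw [card_superlevel_eq_sum_indicator]
  exact integrable_finsetSum _ fun i _ =>
    integrableOn_Ioi_indicator_one measurableSet_Iic le_rfl

lemma setIntegral_card_superlevel {a : ι → ℝ} (ha : 0 ≤ a) :
    ∫ t in Set.Ioi 0, (#(superlevel a t) : ℝ) = ∑ i, a i := by
  simp_rw [card_superlevel_eq_sum_indicator]
  rw [integral_finsetSum _ fun i _ => integrableOn_Ioi_indicator_one measurableSet_Iic le_rfl]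
  refine sum_congr rfl fun i _ => ?_
  rw [integral_indicator_one measurableSet_Iic, measureReal_restrict_apply measurableSet_Iic,
    Set.Iic_inter_Ioi, Real.volume_real_Ioc_of_le (show 0 ≤ a i from ha i), sub_zero]

variable [DecidableEq ι]

def cutWeight (A : Matrix ι ι ℝ) (S : Finset ι) : ℝ := ∑ i ∈ S, ∑ j ∈ Sᶜ, A i j

lemma cutWeight_superlevel_eq_sum_indicator (A : Matrix ι ι ℝ) (a : ι → ℝ) (t : ℝ) :
    cutWeight A (superlevel a t) = ∑ i, ∑ j, A i j * (Set.Ioc (a j) (a i)).indicator 1 t := by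
  simp only [cutWeight, superlevel, compl_filter, sum_filter, Set.indicator_apply,
    Set.mem_Ioc, not_le]
  refine sum_congr rfl fun i _ => ?_
  by_cases h : t ≤ a i <;> simp [h]

lemma integrableOn_cutWeight_superlevel (A : Matrix ι ι ℝ) (a : ι → ℝ) :
    IntegrableOn (fun t => cutWeight A (superlevel a t)) (Set.Ioi 0) := by
  simp_rw [cutWeight_superlevel_eq_sum_indicator]
  exact integrable_finsetSum _ fun i _ => integrable_finsetSum _ fun j _ =>
    (integrableOn_Ioi_indicator_one measurableSet_Ioc Set.Ioc_subset_Iic_self).const_mul _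

lemma setIntegral_cutWeight_superlevel (A : Matrix ι ι ℝ) {a : ι → ℝ} (ha : 0 ≤ a) :
    ∫ t in Set.Ioi 0, cutWeight A (superlevel a t) = ∑ i, ∑ j, A i j * max (a i - a j) 0 := by
  have hint : ∀ i j, IntegrableOn ((Set.Ioc (a j) (a i)).indicator (1 : ℝ → ℝ)) (Set.Ioi 0) :=
    fun i j => integrableOn_Ioi_indicator_one measurableSet_Ioc Set.Ioc_subset_Iic_self
  simp_rw [cutWeight_superlevel_eq_sum_indicator]
  rw [integral_finsetSum (f := fun i t => ∑ j, A i j * (Set.Ioc (a j) (a i)).indicator 1 t) _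
    fun i _ => integrable_finsetSum _ fun j _ => (hint i j).const_mul _]
  refine sum_congr rfl fun i _ => ?_
  rw [integral_finsetSum (f := fun j t => A i j * (Set.Ioc (a j) (a i)).indicator 1 t) _
    fun j _ => (hint i j).const_mul _]
  refine sum_congr rfl fun j _ => ?_
  have hpos : Set.Ioc (a j) (a i) ⊆ Set.Ioi 0 :=
    Set.Ioc_subset_Ioi_self.trans (Set.Ioi_subset_Ioi (show 0 ≤ a j from ha j))
  rw [integral_const_mul, integral_indicator_one measurableSet_Ioc,
    measureReal_restrict_apply measurableSet_Ioc, Set.inter_eq_left.2 hpos, Real.volume_real_Ioc]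

theorem exists_superlevel_cutWeight_lt (A : Matrix ι ι ℝ) {a : ι → ℝ} (ha : 0 ≤ a) {r : ℝ}
    (h : ∑ i, ∑ j, A i j * max (a i - a j) 0 < r * ∑ i, a i) :
    ∃ t > 0, (superlevel a t).Nonempty ∧
      cutWeight A (superlevel a t) < r * #(superlevel a t) := by
  by_contra! hcut
  have hle : ∀ t ∈ Set.Ioi (0 : ℝ), r * #(superlevel a t) ≤ cutWeight A (superlevel a t) := by
    intro t ht
    obtain hS | hS := (superlevel a t).eq_empty_or_nonempty
    · simp [hS, cutWeight]
    · exact hcut t ht hS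
  have := setIntegral_mono_on ((integrableOn_card_superlevel a).const_mul r)
    (integrableOn_cutWeight_superlevel A a) measurableSet_Ioi hle
  rw [integral_const_mul, setIntegral_card_superlevel ha,
    setIntegral_cutWeight_superlevel A ha] at this
  exact this.not_gt h

end LayerCake

section QuadraticForm

variable {ι : Type*} [Fintype ι] {A : Matrix ι ι ℝ} {d : ℝ}

lemma dotProduct_mulVec_eq_sum_sum (A : Matrix ι ι ℝ) (y : ι → ℝ) :
    y ⬝ᵥ A *ᵥ y = ∑ i, ∑ j, A i j * (y i * y j) := by
  simp only [dotProduct, mulVec, mul_sum]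
  exact sum_congr rfl fun i _ => sum_congr rfl fun j _ => by ring

lemma sum_sum_mul_sq_add_sq (hA : A.IsSymm) (hreg : ∀ i, ∑ j, A i j = d) (y : ι → ℝ) :
    ∑ i, ∑ j, A i j * (y i ^ 2 + y j ^ 2) = 2 * d * ∑ i, y i ^ 2 := by
  have hcol : ∀ j, ∑ i, A i j = d := fun j => by
    simpa only [← hA.apply j] using hreg j
  simp only [mul_add, sum_add_distrib, ← sum_mul, hreg]
  rw [sum_comm (f := fun i j => A i j * y j ^ 2)]
  simp only [← sum_mul, hcol, ← mul_sum]
  ring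

lemma sum_sum_mul_sub_sq (hA : A.IsSymm) (hreg : ∀ i, ∑ j, A i j = d) (y : ι → ℝ) :
    ∑ i, ∑ j, A i j * (y i - y j) ^ 2 = 2 * (d * ∑ i, y i ^ 2 - y ⬝ᵥ A *ᵥ y) := by
  have hterm : ∀ i j, A i j * (y i - y j) ^ 2
      = A i j * (y i ^ 2 + y j ^ 2) - 2 * (A i j * (y i * y j)) := fun i j => by ring
  simp only [hterm, sum_sub_distrib, ← mul_sum, sum_sum_mul_sq_add_sq hA hreg,
    dotProduct_mulVec_eq_sum_sum]
  ring

lemma sum_sum_mul_add_sq (hA : A.IsSymm) (hreg : ∀ i, ∑ j, A i j = d) (y : ι → ℝ) :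
    ∑ i, ∑ j, A i j * (y i + y j) ^ 2 = 2 * (d * ∑ i, y i ^ 2 + y ⬝ᵥ A *ᵥ y) := by
  have hterm : ∀ i j, A i j * (y i + y j) ^ 2
      = A i j * (y i ^ 2 + y j ^ 2) + 2 * (A i j * (y i * y j)) := fun i j => by ring
  simp only [hterm, sum_add_distrib, ← mul_sum, sum_sum_mul_sq_add_sq hA hreg,
    dotProduct_mulVec_eq_sum_sum]
  ring

lemma sq_sum_sum_mul_abs_sq_sub_sq_le (hA : ∀ i j, 0 ≤ A i j) (y : ι → ℝ) :
    (∑ i, ∑ j, A i j * |y i ^ 2 - y j ^ 2|) ^ 2 ≤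
      (∑ i, ∑ j, A i j * (y i - y j) ^ 2) * ∑ i, ∑ j, A i j * (y i + y j) ^ 2 := by
  simp only [← Fintype.sum_prod_type']
  refine sum_sq_le_sum_mul_sum_of_sq_le_mul _ (fun p _ => mul_nonneg (hA _ _) (sq_nonneg _))
    (fun p _ => mul_nonneg (hA _ _) (sq_nonneg _)) fun p _ => le_of_eq ?_
  rw [mul_pow, sq_abs]
  ring

lemma sum_sum_mul_max_sub_zero (hA : A.IsSymm) (a : ι → ℝ) :
    ∑ i, ∑ j, A i j * max (a i - a j) 0 = (∑ i, ∑ j, A i j * |a i - a j|) / 2 := by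
  have hswap : ∑ i, ∑ j, A i j * a j = ∑ i, ∑ j, A i j * a i := by
    rw [sum_comm]
    exact sum_congr rfl fun i _ => sum_congr rfl fun j _ => by rw [hA.apply]
  have hterm : ∀ i j, A i j * max (a i - a j) 0
      = (A i j * a i - A i j * a j + A i j * |a i - a j|) / 2 := fun i j => by
    rcases le_total 0 (a i - a j) with h | h
    · rw [max_eq_left h, abs_of_nonneg h]; ring
    · rw [max_eq_right h, abs_of_nonpos h]; ring
  simp only [hterm, ← sum_div, sum_add_distrib, sum_sub_distrib, hswap]
  ring

theorem sum_sum_mul_max_sq_sub_sq_lt (hA0 : ∀ i j, 0 ≤ A i j) (hA : A.IsSymm)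
    (hreg : ∀ i, ∑ j, A i j = d) (hd : 0 ≤ d) {y : ι → ℝ} {u : ℝ} (hu : 0 ≤ u)
    (hP : u * d * ∑ i, y i ^ 2 < y ⬝ᵥ A *ᵥ y) :
    ∑ i, ∑ j, A i j * max (y i ^ 2 - y j ^ 2) 0 < √(1 - u ^ 2) * d * ∑ i, y i ^ 2 := by
  set N := ∑ i, y i ^ 2
  set P := y ⬝ᵥ A *ᵥ y
  set C := ∑ i, ∑ j, A i j * |y i ^ 2 - y j ^ 2|
  have hCS : C ^ 2 ≤ 4 * ((d * N) ^ 2 - P ^ 2) := by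
    have := sq_sum_sum_mul_abs_sq_sub_sq_le hA0 y
    rw [sum_sum_mul_sub_sq hA hreg, sum_sum_mul_add_sq hA hreg] at this
    linarith
  have hP2 : (u * d * N) ^ 2 < P ^ 2 := pow_lt_pow_left₀ hP (by positivity) two_ne_zero
  have hC : C < 2 * (√(1 - u ^ 2) * d * N) := by
    refine lt_of_pow_lt_pow_left₀ 2 (by positivity) ?_
    calc C ^ 2 ≤ 4 * ((d * N) ^ 2 - P ^ 2) := hCS
      _ < 4 * (d * N) ^ 2 * (1 - u ^ 2) := by nlinarith
      _ ≤ 4 * (d * N) ^ 2 * max (1 - u ^ 2) 0 := by gcongr; exact le_max_left _ _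
      _ = (2 * (√(1 - u ^ 2) * d * N)) ^ 2 := by rw [← Real.sq_sqrt']; ring
  rw [sum_sum_mul_max_sub_zero hA]
  linarith

end QuadraticForm

section Rayleigh

variable {ι κ : Type*} [Fintype ι] [Fintype κ]

lemma dotProduct_mulVec_mulVec_self (M : Matrix κ ι ℝ) (x : ι → ℝ) :
    M *ᵥ x ⬝ᵥ M *ᵥ x = x ⬝ᵥ (Mᵀ * M) *ᵥ x := by
  rw [eq_comm, ← mulVec_mulVec, dotProduct_mulVec, vecMul_transpose]

lemma lt_dotProduct_mulVec_of_sqrt_lt [DecidableEq ι] {d : ℝ} (hd : 0 < d) {A : Matrix ι ι ℝ}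
    {M : Matrix κ ι ℝ} (hM : Mᵀ * M = 1 - d⁻¹ • A) {x : ι → ℝ} {c : ℝ}
    (h : √(M *ᵥ x ⬝ᵥ M *ᵥ x) < c * √(x ⬝ᵥ x)) :
    (1 - c ^ 2) * d * ∑ i, x i ^ 2 < x ⬝ᵥ A *ᵥ x := by
  have hN : x ⬝ᵥ x = ∑ i, x i ^ 2 := by simp only [dotProduct, sq]
  have hsq := (Real.sqrt_lt' ((Real.sqrt_nonneg _).trans_lt h)).1 h
  rw [mul_pow, Real.sq_sqrt (hN ▸ by positivity), dotProduct_mulVec_mulVec_self, hM,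
    sub_mulVec, one_mulVec, smul_mulVec, dotProduct_sub, dotProduct_smul, smul_eq_mul, hN] at hsq
  have hlt : (1 - c ^ 2) * ∑ i, x i ^ 2 < d⁻¹ * (x ⬝ᵥ A *ᵥ x) := by linarith
  linarith [(lt_inv_mul_iff₀ hd).1 hlt]

end Rayleigh

theorem rip_violation_gives_small_expander_general (n d m : ℕ) (hd : 0 < d)
    (A : Matrix (Fin n) (Fin n) ℝ) (hsymm : A.IsSymm)
    (h01 : ∀ i j, A i j = 0 ∨ A i j = 1)
    (hreg : ∀ i, ∑ j, A i j = d)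
    (M : Matrix (Fin m) (Fin n) ℝ) (hM : Mᵀ * M = 1 - (d : ℝ)⁻¹ • A)
    (k : ℕ) (δ : ℝ) (hδ0 : 0 < δ) (hδ1 : δ < 1)
    (x : Fin n → ℝ) (hsparse : (Function.support x).ncard ≤ k)
    (hviol : Real.sqrt (M.mulVec x ⬝ᵥ M.mulVec x)
              < (1 - δ) * Real.sqrt (x ⬝ᵥ x)) :
    ∃ S : Finset (Fin n), S.Nonempty ∧ S.card ≤ k ∧
      (∑ i ∈ S, ∑ j ∈ Sᶜ, A i j) / (d * S.card)
        ≤ Real.sqrt (1 - (2 * δ - δ ^ 2) ^ 2) := by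
  have hA0 : ∀ i j, 0 ≤ A i j := fun i j => by rcases h01 i j with h | h <;> simp [h]
  have hP : (2 * δ - δ ^ 2) * d * ∑ i, x i ^ 2 < x ⬝ᵥ A *ᵥ x := by
    have := lt_dotProduct_mulVec_of_sqrt_lt (Nat.cast_pos.2 hd) hM hviol
    rwa [show 1 - (1 - δ) ^ 2 = 2 * δ - δ ^ 2 by ring] at this
  obtain ⟨t, ht, hne, hcut⟩ := exists_superlevel_cutWeight_lt A (fun i => sq_nonneg (x i))
    (sum_sum_mul_max_sq_sub_sq_lt hA0 hsymm hreg d.cast_nonneg (by nlinarith) hP)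
  refine ⟨superlevel (fun i => x i ^ 2) t, hne, ?_, ?_⟩
  · have hsub : (superlevel (fun i => x i ^ 2) t : Set (Fin n)) ⊆ Function.support x :=
      fun i hi hx0 => by simp [superlevel, hx0] at hi; linarith
    rw [← Set.ncard_coe_finset]
    exact (Set.ncard_le_ncard hsub).trans hsparse
  · rw [div_le_iff₀ (by positivity)]
    exact (hcut.trans_eq (mul_assoc _ _ _)).le

/-- If M^T M = L and there is a k-sparse x with ‖Mx‖ < (1−δ)‖x‖, then there is
a nonempty set S with |S| ≤ k and φ_G(S) ≤ sqrt(1 − (2δ − δ²)²). -/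
theorem rip_violation_gives_small_expander (n d m : ℕ) (hd : 0 < d)
    (A : Matrix (Fin n) (Fin n) ℝ) (hsymm : A.IsSymm)
    (h01 : ∀ i j, A i j = 0 ∨ A i j = 1) (hdiag : ∀ i, A i i = 0)
    (hreg : ∀ i, ∑ j, A i j = d)
    (M : Matrix (Fin m) (Fin n) ℝ) (hM : Mᵀ * M = 1 - (d : ℝ)⁻¹ • A)
    (k : ℕ) (δ : ℝ) (hδ0 : 0 < δ) (hδ1 : δ < 1)
    (x : Fin n → ℝ) (hx : x ≠ 0) (hsparse : (Function.support x).ncard ≤ k)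
    (hviol : Real.sqrt (M.mulVec x ⬝ᵥ M.mulVec x)
              < (1 - δ) * Real.sqrt (x ⬝ᵥ x)) :
    ∃ S : Finset (Fin n), S.Nonempty ∧ S.card ≤ k ∧
      (∑ i ∈ S, ∑ j ∈ Sᶜ, A i j) / (d * S.card)
        ≤ Real.sqrt (1 - (2 * δ - δ ^ 2) ^ 2) :=
  rip_violation_gives_small_expander_general n d m hd A hsymm h01 hreg M hM k δ hδ0 hδ1 x hsparse
    hviol
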